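/- Let G be a triangulated Laman graph with N ≥ 2 vertices and let p ∈ P_G be strongly rigid. Then p is infinitesimally rigid: the kernel of the derivative dρ(p) of the distance map ρ at p has dimension exactly 3. -/

import Mathlib

open scoped BigOperators
open scoped Classical

noncomputable section

abbrev Plane : Type := EuclideanSpace ℝ (Fin 2)

abbrev Config (ι : Type) : Type := PiLp 2 (fun _ : ι => Plane)

def ConfigSpace {N : ℕ} (G : SimpleGraph (Fin N)) : Set (Config (Fin N)) :=
  {p | ∀ i j : Fin N, G.Adj i j → p i ≠ p j}

noncomputable def formationField {ι : Type} [Fintype ι] (Adj : ι → ι → Prop)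
    (f : ι → ι → ℝ → ℝ) (q : Config ι) : Config ι :=
  WithLp.toLp 2 (fun v => ∑ u, if Adj v u then f v u ‖q v - q u‖ • (q u - q v) else 0)

noncomputable def potential {N : ℕ} (G : SimpleGraph (Fin N)) (f : Fin N → Fin N → ℝ → ℝ)
    (p : Config (Fin N)) : ℝ :=
  ∑ i, ∑ j, if G.Adj i j ∧ i < j then ∫ t in (1:ℝ)..(‖p i - p j‖), t * f i j t else 0

def MemU (f : ℝ → ℝ) : Prop :=
  ContDiffOn ℝ 1 f (Set.Ioi 0) ∧
  (∀ x : ℝ, 0 < x → 0 < deriv (fun t => t * f t) x) ∧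
  (∃! d : ℝ, 0 < d ∧ f d = 0) ∧
  Filter.Tendsto (fun x : ℝ => ∫ t in x..(1:ℝ), t * f t) (nhdsWithin 0 (Set.Ioi 0)) Filter.atBot

def SO2 (θ : Matrix (Fin 2) (Fin 2) ℝ) : Prop :=
  θ ∈ Matrix.orthogonalGroup (Fin 2) ℝ ∧ θ.det = 1

noncomputable def rotAct {ι : Type} (θ : Matrix (Fin 2) (Fin 2) ℝ) (v : Plane) (p : Config ι) :
    Config ι :=
  WithLp.toLp 2 (fun i => Matrix.toEuclideanLin θ (p i) + v)

def orbitSE2 {ι : Type} (p : Config ι) : Set (Config ι) :=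
  {q | ∃ θ : Matrix (Fin 2) (Fin 2) ℝ, SO2 θ ∧ ∃ v : Plane, q = rotAct θ v p}

noncomputable def basisVec {ι : Type} [DecidableEq ι] (i : ι) (a : Fin 2) : Config ι :=
  WithLp.toLp 2 (Pi.single i (EuclideanSpace.single a (1:ℝ)) : ι → Plane)

noncomputable def hessMat {ι : Type} [Fintype ι] [DecidableEq ι] (Φ : Config ι → ℝ)
    (p : Config ι) : Matrix (ι × Fin 2) (ι × Fin 2) ℝ :=
  Matrix.of fun q r => fderiv ℝ (fun x => fderiv ℝ Φ x (basisVec q.1 q.2)) p (basisVec r.1 r.2)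

noncomputable def jacMat {ι : Type} [Fintype ι] [DecidableEq ι] (F : Config ι → Config ι)
    (p : Config ι) : Matrix (ι × Fin 2) (ι × Fin 2) ℝ :=
  Matrix.of fun q r => fderiv ℝ (fun x => F x q.1 q.2) p (basisVec r.1 r.2)

noncomputable def posIndex {n : Type} [Fintype n] [DecidableEq n] (A : Matrix n n ℝ) : ℕ :=
  Multiset.card (A.charpoly.roots.filter fun x => 0 < x)

noncomputable def negIndex {n : Type} [Fintype n] [DecidableEq n] (A : Matrix n n ℝ) : ℕ :=
  Multiset.card (A.charpoly.roots.filter fun x => x < 0)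

noncomputable def nullIndex {n : Type} [Fintype n] [DecidableEq n] (A : Matrix n n ℝ) : ℕ :=
  Multiset.card (A.charpoly.roots.filter fun x => x = 0)

inductive IsTriangulatedLaman : {N : ℕ} → SimpleGraph (Fin N) → Prop
  | base : IsTriangulatedLaman (⊤ : SimpleGraph (Fin 2))
  | grow {N : ℕ} (G' : SimpleGraph (Fin (N + 2))) (G : SimpleGraph (Fin (N + 3)))
      (j k : Fin (N + 2)) :
      IsTriangulatedLaman G' → G'.Adj j k →
      (∀ a b : Fin (N + 2), G.Adj a.castSucc b.castSucc ↔ G'.Adj a b) →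
      (∀ a : Fin (N + 2), G.Adj a.castSucc (Fin.last (N + 2)) ↔ a = j ∨ a = k) →
      IsTriangulatedLaman G

def StronglyRigid {N : ℕ} (G : SimpleGraph (Fin N)) (p : Config (Fin N)) : Prop :=
  ∀ i j k : Fin N, G.Adj i j → G.Adj i k → G.Adj j k →
    ¬ Collinear ℝ ({p i, p j, p k} : Set Plane)

def TriangleInequalities {N : ℕ} (G : SimpleGraph (Fin N)) (d : Fin N → Fin N → ℝ) : Prop :=
  ∀ i j k : Fin N, G.Adj i j → G.Adj i k → G.Adj j k → d j k < d i j + d i k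

def vertexSet {N : ℕ} (B : Finset (Sym2 (Fin N))) : Finset (Fin N) :=
  Finset.univ.filter fun v => ∃ e ∈ B, v ∈ e

def inducedSubgraph {N : ℕ} (B : Finset (Sym2 (Fin N))) : SimpleGraph ↥(vertexSet B) :=
  SimpleGraph.fromEdgeSet {e | Sym2.map Subtype.val e ∈ B}

def InducedTLaman {N : ℕ} (B : Finset (Sym2 (Fin N))) : Prop :=
  ∃ (M : ℕ) (H : SimpleGraph (Fin M)), IsTriangulatedLaman H ∧ Nonempty (inducedSubgraph B ≃g H)

def IsLineLamanPart {N : ℕ} (p : Config (Fin N)) (B : Finset (Sym2 (Fin N))) : Prop :=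
  InducedTLaman B ∧ Collinear ℝ (p '' (vertexSet B : Set (Fin N)))

def IsLineLamanPartition {N : ℕ} (G : SimpleGraph (Fin N)) (p : Config (Fin N))
    (P : Finset (Finset (Sym2 (Fin N)))) : Prop :=
  (∀ B ∈ P, B.Nonempty ∧ (B : Set (Sym2 (Fin N))) ⊆ G.edgeSet ∧ IsLineLamanPart p B) ∧
  ∀ e ∈ G.edgeSet, ∃! B, B ∈ P ∧ e ∈ B

def Refines {N : ℕ} (Q P : Finset (Finset (Sym2 (Fin N)))) : Prop :=
  ∀ B ∈ Q, ∃ C ∈ P, B ⊆ C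

def IsIndependentPartition {N : ℕ} (G : SimpleGraph (Fin N)) (p : Config (Fin N))
    (P : Finset (Finset (Sym2 (Fin N)))) : Prop :=
  IsLineLamanPartition G p P ∧ ∀ Q, IsLineLamanPartition G p Q → Refines Q P

def subConfig {N : ℕ} (p : Config (Fin N)) (B : Finset (Sym2 (Fin N))) :
    Config ↥(vertexSet B) :=
  WithLp.toLp 2 (fun v : ↥(vertexSet B) => p v.1)

noncomputable def subField {N : ℕ} (f : Fin N → Fin N → ℝ → ℝ) (B : Finset (Sym2 (Fin N))) :
    Config ↥(vertexSet B) → Config ↥(vertexSet B) :=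
  formationField (fun u v => s(u.1, v.1) ∈ B) (fun u v => f u.1 v.1)

def IsEquivariantMorse {N : ℕ} (G : SimpleGraph (Fin N)) (f : Fin N → Fin N → ℝ → ℝ) : Prop :=
  (∃ S : Finset (Config (Fin N)),
      {p | p ∈ ConfigSpace G ∧ formationField G.Adj f p = 0} = ⋃ q ∈ S, orbitSE2 q) ∧
  ∀ p, p ∈ ConfigSpace G → formationField G.Adj f p = 0 →
    nullIndex (jacMat (formationField G.Adj f) p) = 3

noncomputable def distMap {N : ℕ} (G : SimpleGraph (Fin N)) (p : Config (Fin N)) :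
    ↥G.edgeFinset → ℝ :=
  fun e => Sym2.lift ⟨fun i j => ‖p i - p j‖ ^ 2, fun i j => by dsimp only; rw [norm_sub_rev]⟩ e.1

/-!
The kernel of `dρ(p)` is the space of infinitesimal motions: velocity fields `v` with
`⟪x_i - x_j, v_i - v_j⟫ = 0` for every edge. For a single edge in the plane it is the kernel of
one nonzero functional on `ℝ⁴`, hence 3-dimensional. When a new vertex is attached to an edge
`jk`, strong rigidity makes the triangle non-degenerate, so the two constraints at the new vertex
determine its velocity uniquely from those of `j` and `k`: restricting to the old vertices is an
isomorphism of motion spaces, and the dimension stays 3 along the whole construction of `G`.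
-/

open scoped RealInnerProductSpace

section Motions

variable {ι : Type}

def infinitesimalMotions (G : SimpleGraph ι) (p : Config ι) : Submodule ℝ (Config ι) where
  carrier := {v | ∀ i j, G.Adj i j → ⟪p i - p j, v i - v j⟫ = 0}
  add_mem' {v w} hv hw i j hij := by
    simp only [PiLp.add_apply, add_sub_add_comm, inner_add_right, hv i j hij, hw i j hij,
      add_zero]
  zero_mem' i j _ := by simp
  smul_mem' c v hv i j hij := by
    simp only [PiLp.smul_apply, ← smul_sub, real_inner_smul_right, hv i j hij, mul_zero]

theorem mem_infinitesimalMotions {G : SimpleGraph ι} {p v : Config ι} :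
    v ∈ infinitesimalMotions G p ↔ ∀ i j, G.Adj i j → ⟪p i - p j, v i - v j⟫ = 0 :=
  Iff.rfl

theorem inner_sub_sub_comm (p v : Config ι) (i j : ι) :
    ⟪p i - p j, v i - v j⟫ = ⟪p j - p i, v j - v i⟫ := by
  rw [← neg_sub (p i), ← neg_sub (v i), inner_neg_neg]

/-- Half the derivative of `q ↦ ‖q i - q j‖²`. -/
def edgeDeriv (p : Config ι) (i j : ι) : Config ι →L[ℝ] ℝ :=
  (innerSL ℝ (p i - p j)).comp
    (PiLp.proj 2 (𝕜 := ℝ) (fun _ : ι => Plane) i - PiLp.proj 2 (fun _ : ι => Plane) j)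

theorem edgeDeriv_apply (p v : Config ι) (i j : ι) :
    edgeDeriv p i j v = ⟪p i - p j, v i - v j⟫ :=
  rfl

theorem edgeDeriv_comm (p : Config ι) (i j : ι) : edgeDeriv p i j = edgeDeriv p j i := by
  ext v
  exact inner_sub_sub_comm p v i j

theorem hasFDerivAt_norm_sub_sq [Fintype ι] (p : Config ι) (i j : ι) :
    HasFDerivAt (fun q : Config ι => ‖q i - q j‖ ^ 2) (2 • edgeDeriv p i j) p :=
  (PiLp.proj 2 (𝕜 := ℝ) (fun _ : ι => Plane) i -
    PiLp.proj 2 (fun _ : ι => Plane) j).hasFDerivAt.norm_sq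

end Motions

def rigidityMap {N : ℕ} (G : SimpleGraph (Fin N)) (p : Config (Fin N)) :
    Config (Fin N) →L[ℝ] (G.edgeFinset → ℝ) :=
  ContinuousLinearMap.pi fun e => Sym2.lift ⟨fun i j => edgeDeriv p i j, edgeDeriv_comm p⟩ e.1

theorem hasFDerivAt_distMap {N : ℕ} (G : SimpleGraph (Fin N)) (p : Config (Fin N)) :
    HasFDerivAt (distMap G) (2 • rigidityMap G p) p := by
  refine hasFDerivAt_pi'' fun ⟨e, _⟩ => ?_
  induction e using Sym2.ind with
  | _ i j => exact hasFDerivAt_norm_sub_sq p i j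

theorem ker_rigidityMap {N : ℕ} (G : SimpleGraph (Fin N)) (p : Config (Fin N)) :
    LinearMap.ker (rigidityMap G p : Config (Fin N) →ₗ[ℝ] (G.edgeFinset → ℝ)) =
      infinitesimalMotions G p := by
  ext v
  simp only [LinearMap.mem_ker, mem_infinitesimalMotions, funext_iff, Subtype.forall,
    SimpleGraph.mem_edgeFinset, Sym2.forall, SimpleGraph.mem_edgeSet, ContinuousLinearMap.coe_coe,
    rigidityMap, ContinuousLinearMap.pi_apply, Sym2.lift_mk, edgeDeriv_apply, Pi.zero_apply]

section Triangle

variable {E : Type*} [NormedAddCommGroup E] [InnerProductSpace ℝ E]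
  [Fact (Module.finrank ℝ E = 2)]

attribute [local instance] FiniteDimensional.of_fact_finrank_eq_two

theorem eq_zero_of_inner_eq_zero_of_not_collinear {a b c x : E}
    (habc : ¬ Collinear ℝ ({a, b, c} : Set E)) (hb : ⟪a - b, x⟫ = 0) (hc : ⟪a - c, x⟫ = 0) :
    x = 0 := by
  by_contra hx
  refine habc (collinear_iff_finrank_le_one.2 ?_)
  have hline : Module.finrank ℝ (ℝ ∙ x)ᗮ = 1 := Submodule.finrank_orthogonal_span_singleton hx
  refine hline ▸ Submodule.finrank_mono ?_
  rw [vectorSpan_eq_span_vsub_set_right ℝ (Set.mem_insert a _), Submodule.span_le]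
  rintro _ ⟨q, hq, rfl⟩
  simp only [SetLike.mem_coe, Submodule.mem_orthogonal_singleton_iff_inner_right, vsub_eq_sub]
  rcases hq with rfl | rfl | rfl
  · simp
  all_goals rwa [← neg_sub, inner_neg_right, neg_eq_zero, real_inner_comm]

theorem existsUnique_inner_sub_eq_zero_of_not_collinear {a b c : E}
    (habc : ¬ Collinear ℝ ({a, b, c} : Set E)) (y z : E) :
    ∃! x : E, ⟪a - b, x - y⟫ = 0 ∧ ⟪a - c, x - z⟫ = 0 := by
  let T : E →ₗ[ℝ] ℝ × ℝ :=
    ((innerSL ℝ (a - b)).prod (innerSL ℝ (a - c)) : E →L[ℝ] ℝ × ℝ)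
  have hT_inj : Function.Injective T := by
    rw [← LinearMap.ker_eq_bot, LinearMap.ker_eq_bot']
    intro x hx
    exact eq_zero_of_inner_eq_zero_of_not_collinear habc (congrArg Prod.fst hx)
      (congrArg Prod.snd hx)
  have hT : Function.Bijective T := by
    refine ⟨hT_inj, (LinearMap.injective_iff_surjective_of_finrank_eq_finrank ?_).1 hT_inj⟩
    simp [Fact.out (p := Module.finrank ℝ E = 2)]
  convert hT.existsUnique (⟪a - b, y⟫, ⟪a - c, z⟫) using 2 with x
  simp only [inner_sub_right, sub_eq_zero, Prod.ext_iff]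
  rfl

end Triangle

theorem finrank_infinitesimalMotions_top_fin_two (p : Config (Fin 2)) (hp : p 0 ≠ p 1) :
    Module.finrank ℝ (infinitesimalMotions (⊤ : SimpleGraph (Fin 2)) p) = 3 := by
  set φ : Module.Dual ℝ (Config (Fin 2)) := (edgeDeriv p 0 1 : Config (Fin 2) →ₗ[ℝ] ℝ)
  have hker : infinitesimalMotions ⊤ p = LinearMap.ker φ := by
    ext v
    rw [mem_infinitesimalMotions, LinearMap.mem_ker]
    refine ⟨fun hv => hv 0 1 (by decide), fun hv i j hij => ?_⟩
    fin_cases i <;> fin_cases j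
    · exact absurd rfl hij
    · exact hv
    · exact (inner_sub_sub_comm p v 1 0).trans hv
    · exact absurd rfl hij
  have hφ : φ ≠ 0 := by
    intro h
    have := LinearMap.congr_fun h (WithLp.toLp 2 (Pi.single 0 (p 0 - p 1)))
    simp [φ, edgeDeriv_apply, sub_eq_zero, hp] at this
  have := Module.Dual.finrank_ker_add_one_of_ne_zero hφ
  have hdim : Module.finrank ℝ (Config (Fin 2)) = 4 := by
    rw [(WithLp.linearEquiv 2 ℝ _).finrank_eq, Module.finrank_pi_fintype]
    simp
  rw [← hker, hdim] at this
  omega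

def configInit {n : ℕ} : Config (Fin (n + 1)) →ₗ[ℝ] Config (Fin n) where
  toFun v := WithLp.toLp 2 fun a => v a.castSucc
  map_add' _ _ := rfl
  map_smul' _ _ := rfl

@[simp]
theorem configInit_apply {n : ℕ} (v : Config (Fin (n + 1))) (a : Fin n) :
    configInit v a = v a.castSucc :=
  rfl

section VertexAddition

variable {n : ℕ} {G' : SimpleGraph (Fin n)} {G : SimpleGraph (Fin (n + 1))} {j k : Fin n}

theorem mem_infinitesimalMotions_iff_configInit
    (hcast : ∀ a b : Fin n, G.Adj a.castSucc b.castSucc ↔ G'.Adj a b)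
    (hlast : ∀ a : Fin n, G.Adj a.castSucc (Fin.last n) ↔ a = j ∨ a = k)
    {p v : Config (Fin (n + 1))} :
    v ∈ infinitesimalMotions G p ↔
      configInit v ∈ infinitesimalMotions G' (configInit p) ∧
      ⟪p (Fin.last n) - p j.castSucc, v (Fin.last n) - v j.castSucc⟫ = 0 ∧
      ⟪p (Fin.last n) - p k.castSucc, v (Fin.last n) - v k.castSucc⟫ = 0 := by
  refine ⟨fun hv => ⟨fun a b hab => hv _ _ ((hcast a b).2 hab),
    hv _ _ ((hlast j).2 (.inl rfl)).symm, hv _ _ ((hlast k).2 (.inr rfl)).symm⟩, ?_⟩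
  rintro ⟨hv', hj, hk⟩
  have hv_last : ∀ a : Fin n, G.Adj a.castSucc (Fin.last n) →
      ⟪p (Fin.last n) - p a.castSucc, v (Fin.last n) - v a.castSucc⟫ = 0 := by
    intro a ha
    rcases (hlast a).1 ha with rfl | rfl
    exacts [hj, hk]
  intro i i' h
  induction i using Fin.lastCases <;> induction i' using Fin.lastCases
  · exact absurd h (G.loopless.irrefl _)
  · exact hv_last _ h.symm
  · exact (inner_sub_sub_comm p v _ _).trans (hv_last _ h)
  · exact hv' _ _ ((hcast _ _).1 h)

open EuclideanSpace in
theorem finrank_infinitesimalMotions_eq_configInit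
    (hcast : ∀ a b : Fin n, G.Adj a.castSucc b.castSucc ↔ G'.Adj a b)
    (hlast : ∀ a : Fin n, G.Adj a.castSucc (Fin.last n) ↔ a = j ∨ a = k)
    {p : Config (Fin (n + 1))}
    (hnc : ¬ Collinear ℝ ({p (Fin.last n), p j.castSucc, p k.castSucc} : Set Plane)) :
    Module.finrank ℝ (infinitesimalMotions G p) =
      Module.finrank ℝ (infinitesimalMotions G' (configInit p)) := by
  have hmem := fun {v} => mem_infinitesimalMotions_iff_configInit (p := p) (v := v) hcast hlast
  let F := configInit.restrict fun v hv => (hmem.1 hv).1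
  refine (LinearEquiv.ofBijective F ⟨fun v w hvw => ?_, fun ⟨w, hw⟩ => ?_⟩).finrank_eq
  · have hinit (a : Fin n) : v.1 a.castSucc = w.1 a.castSucc := congr(($hvw).1 a)
    have hv := (hmem.1 v.2).2
    have hw := (hmem.1 w.2).2
    rw [← hinit, ← hinit] at hw
    have hlast_eq := (existsUnique_inner_sub_eq_zero_of_not_collinear hnc _ _).unique hv hw
    ext1
    ext i : 1
    induction i using Fin.lastCases
    exacts [hlast_eq, hinit _]
  · obtain ⟨x, hxj, hxk⟩ :=
      (existsUnique_inner_sub_eq_zero_of_not_collinear hnc (w j) (w k)).exists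
    let v : Config (Fin (n + 1)) := WithLp.toLp 2 (Fin.snoc (fun a => w a) x)
    have hinit : configInit v = w := by
      ext a : 1
      simp [v]
    refine ⟨⟨v, hmem.2 ⟨hinit ▸ hw, ?_, ?_⟩⟩, Subtype.ext hinit⟩ <;>
      simpa [v]

end VertexAddition

theorem IsTriangulatedLaman.finrank_infinitesimalMotions {N : ℕ} {G : SimpleGraph (Fin N)}
    (hG : IsTriangulatedLaman G) {p : Config (Fin N)} (hp : p ∈ ConfigSpace G)
    (hsr : StronglyRigid G p) : Module.finrank ℝ (infinitesimalMotions G p) = 3 := by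
  induction hG with
  | base => exact finrank_infinitesimalMotions_top_fin_two p (hp 0 1 (by decide))
  | grow G' G j k _ hjk hcast hlast ih =>
    have hj := (hlast j).2 (.inl rfl)
    have hk := (hlast k).2 (.inr rfl)
    rw [finrank_infinitesimalMotions_eq_configInit hcast hlast
      (hsr _ _ _ hj.symm hk.symm ((hcast j k).2 hjk))]
    exact ih (fun a b hab => hp _ _ ((hcast a b).2 hab)) fun a b c hab hac hbc =>
      hsr _ _ _ ((hcast a b).2 hab) ((hcast a c).2 hac) ((hcast b c).2 hbc)

open Filter MeasureTheory

theorem stmt_7_general {N : ℕ} (G : SimpleGraph (Fin N)) (hG : IsTriangulatedLaman G)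
    (p : Config (Fin N)) (hp : p ∈ ConfigSpace G) (hsr : StronglyRigid G p) :
    Module.finrank ℝ ↥(LinearMap.ker (fderiv ℝ (distMap G) p : Config (Fin N) →ₗ[ℝ] (↥G.edgeFinset → ℝ))) = 3 := by
  -- instance search for this times out through the `PiLp` structure
  have : ContinuousSMul ℝ (Config (Fin N)) := IsBoundedSMul.continuousSMul
  rw [(hasFDerivAt_distMap G p).fderiv, ContinuousLinearMap.toLinearMap_smul,
    ← Nat.cast_smul_eq_nsmul ℝ, Nat.cast_ofNat, LinearMap.ker_smul _ _ two_ne_zero,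
    ker_rigidityMap]
  exact hG.finrank_infinitesimalMotions hp hsr

theorem stmt_7 {N : ℕ} (hN : 2 ≤ N) (G : SimpleGraph (Fin N)) (hG : IsTriangulatedLaman G)
    (p : Config (Fin N)) (hp : p ∈ ConfigSpace G) (hsr : StronglyRigid G p) :
    Module.finrank ℝ ↥(LinearMap.ker (fderiv ℝ (distMap G) p : Config (Fin N) →ₗ[ℝ] (↥G.edgeFinset → ℝ))) = 3 :=
  stmt_7_general G hG p hp hsr

end
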